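/- Given indeterminates uᵢ, vᵢ, kᵢ, xⱼ, yⱼ, lⱼ (1 ≤ i,j ≤ n) with kᵢ pairwise distinct and lⱼ ≠ kᵢ for all i,j, the n×n determinant det((uᵢyⱼ − vᵢxⱼ)/(lⱼ − kᵢ)) equals (∏_{i,j}(lⱼ − kᵢ))⁻¹ times the 2n×2n determinant of the block matrix [[Uₙ, Xₙ],[Vₙ, Yₙ]], where Uₙ has rows alternating (u₁,…,uₙ), (k₁v₁,…,kₙvₙ), (k₁²u₁,…,kₙ²uₙ), …, Vₙ has rows alternating (v₁,…,vₙ), (k₁u₁,…,kₙuₙ), (k₁²v₁,…,kₙ²vₙ), …, and Xₙ, Yₙ are defined analogously with xⱼ, yⱼ, lⱼ. -/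

import Mathlib

/-!
Writing `Wₖ = (kⱼ^r)_{r,j}` for the transposed Vandermonde matrix, swapping the `r`-th rows of the
two block rows for every odd `r` turns the `2n × 2n` matrix into
`[[Wₖ Dᵤ, Wₗ Dₓ], [Wₖ Dᵥ, Wₗ D_y]]`, at the cost of the sign `∏ᵣ (-1)^r`. Since `Wₖ⁻¹ Wₗ` is the
matrix `L` of Lagrange basis polynomials at the nodes `kᵢ` evaluated at the points `lⱼ`, this matrix
is `diag(Wₖ, Wₖ) · [[Dᵤ, L Dₓ], [Dᵥ, L D_y]]`, and as `Dᵤ, Dᵥ` commute the last determinant is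
`det (Dᵤ L D_y - Dᵥ L Dₓ)`. The barycentric formula `Lᵢⱼ = wᵢ ∏ₘ (lⱼ - kₘ) / (lⱼ - kᵢ)` exhibits
this as the Cauchy-type matrix of the theorem scaled by the nodal weights `wᵢ` on the left and by
`∏ₘ (lⱼ - kₘ)` on the right. Finally `det Wₖ ^ 2 · ∏ᵢ wᵢ` is again the sign `∏ᵣ (-1)^r`, and the
two signs cancel.
-/

open Matrix Finset Polynomial

theorem prod_neg_one_pow_sq {ι R : Type*} [CommRing R] (s : Finset ι) (f : ι → ℕ) :
    (∏ i ∈ s, (-1 : R) ^ f i) ^ 2 = 1 := by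
  rw [← prod_pow]
  simp [← pow_mul, pow_mul']

namespace Matrix

section Commute

variable {m R : Type*} [Fintype m] [DecidableEq m] [CommRing R]

theorem det_fromBlocks_of_commute_of_isRegular_det {A C : Matrix m m R} (B D : Matrix m m R)
    (hAC : Commute A C) (hA : IsRegular A.det) :
    (fromBlocks A B C D).det = (A * D - C * B).det := by
  have hmul : fromBlocks 1 0 (-C) A * fromBlocks A B C D = fromBlocks A B 0 (A * D - C * B) := by
    rw [fromBlocks_multiply, hAC.eq]
    simp [sub_eq_add_neg, add_comm]
  have hdet := congrArg det hmul
  rw [det_mul, det_fromBlocks_zero₁₂, det_fromBlocks_zero₂₁, det_one, one_mul] at hdet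
  exact hA.left (by simpa [mul_comm] using hdet)

/-- Replace `A` by `X + A`, whose determinant is a characteristic polynomial, hence monic and
regular in `R[X]`, and then evaluate at `X = 0`. -/
theorem det_fromBlocks_of_commute {A C : Matrix m m R} (B D : Matrix m m R) (hAC : Commute A C) :
    (fromBlocks A B C D).det = (A * D - C * B).det := by
  let φ : Matrix m m R →+* Matrix m m R[X] := Polynomial.C.mapMatrix
  let ev : R[X] →+* R := evalRingHom 0
  have hchar : charmatrix (-A) = scalar m X + φ A := by
    simp [charmatrix, φ, sub_eq_add_neg, Matrix.map_neg]
  have hcomm : Commute (charmatrix (-A)) (φ C) := by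
    rw [hchar]
    exact (scalar_commute _ (fun _ => Commute.all _ _) _).add_left (hAC.map φ)
  have key := congrArg ev <| det_fromBlocks_of_commute_of_isRegular_det (φ B) (φ D) hcomm
    (charpoly_monic (-A)).isRegular
  have hev (M : Matrix m m R) : ev.mapMatrix (φ M) = M := by
    ext
    simp [φ, ev]
  have hevA : ev.mapMatrix (charmatrix (-A)) = A := by
    rw [hchar, map_add, hev]
    ext
    simp [ev, scalar_apply]
  rwa [ev.map_det, ev.map_det, map_sub, map_mul, map_mul, hev, hev, hev, hevA,
    RingHom.mapMatrix_apply, fromBlocks_map, ← RingHom.mapMatrix_apply, ← RingHom.mapMatrix_apply,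
    ← RingHom.mapMatrix_apply, ← RingHom.mapMatrix_apply, hev, hev, hev, hevA] at key

end Commute

theorem prod_prod_erase_sub_eq_neg_one_pow_mul_det_vandermonde_sq {R : Type*} [CommRing R]
    {n : ℕ} (k : Fin n → R) :
    ∏ i, ∏ j ∈ univ.erase i, (k i - k j)
      = (∏ r : Fin n, (-1 : R) ^ (r : ℕ)) * (vandermonde k).det ^ 2 := by
  have hneg : vandermonde (fun i => -k i)
      = vandermonde k * diagonal fun r : Fin n => (-1 : R) ^ (r : ℕ) := by
    ext i r
    rw [mul_diagonal, vandermonde_apply, vandermonde_apply, neg_pow, mul_comm]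
  have hdet_neg : (vandermonde fun i => -k i).det = ∏ i, ∏ j ∈ Ioi i, (k i - k j) := by
    simp [det_vandermonde, sub_eq_neg_add, add_comm]
  calc ∏ i, ∏ j ∈ univ.erase i, (k i - k j)
      = ∏ i, ∏ j ∈ Ioi i, (k i - k j) * (k j - k i) := by
        simp_rw [← compl_singleton]
        exact (prod_prod_Ioi_mul_eq_prod_prod_off_diag fun a b => k b - k a).symm
    _ = (vandermonde fun i => -k i).det * (vandermonde k).det := by
        simp_rw [prod_mul_distrib, hdet_neg, det_vandermonde]
    _ = _ := by
        rw [hneg, det_mul, det_diagonal]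
        ring

theorem vandermonde_transpose_mul_lagrangeBasis {F : Type*} [Field F] {n : ℕ} {k : Fin n → F}
    (hk : Function.Injective k) (t : Fin n → F) :
    (vandermonde k)ᵀ * of (fun i j => (Lagrange.basis univ k i).eval (t j)) = (vandermonde t)ᵀ := by
  ext r j
  have hinterp : (X ^ (r : ℕ) : F[X]) = Lagrange.interpolate univ k fun i => k i ^ (r : ℕ) := by
    simpa using Lagrange.eq_interpolate (f := X ^ (r : ℕ)) hk.injOn
      (by simp)
  have heval := congrArg (eval (t j)) hinterp
  simp only [eval_pow, eval_X, Lagrange.interpolate_apply, eval_finsetSum, eval_mul,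
    eval_C] at heval
  simp [mul_apply, vandermonde_apply, heval]

theorem det_fromBlocks_vandermonde_mul_diagonal {K : Type*} [Field K] {n : ℕ}
    (u v k x y l : Fin n → K) (hk : Function.Injective k) (hkl : ∀ i j, l j ≠ k i) :
    (fromBlocks ((vandermonde k)ᵀ * diagonal u) ((vandermonde l)ᵀ * diagonal x)
        ((vandermonde k)ᵀ * diagonal v) ((vandermonde l)ᵀ * diagonal y)).det
      = (∏ r : Fin n, (-1 : K) ^ (r : ℕ)) * ((∏ i, ∏ j, (l j - k i)) *
        (of fun i j => (u i * y j - v i * x j) / (l j - k i)).det) := by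
  set L : Matrix (Fin n) (Fin n) K := of fun i j => (Lagrange.basis univ k i).eval (l j)
  have hfactor : fromBlocks ((vandermonde k)ᵀ * diagonal u) ((vandermonde l)ᵀ * diagonal x)
        ((vandermonde k)ᵀ * diagonal v) ((vandermonde l)ᵀ * diagonal y)
      = fromBlocks (vandermonde k)ᵀ 0 0 (vandermonde k)ᵀ *
        fromBlocks (diagonal u) (L * diagonal x) (diagonal v) (L * diagonal y) := by
    simp [fromBlocks_multiply, ← Matrix.mul_assoc, L, vandermonde_transpose_mul_lagrangeBasis hk]
  have hschur : diagonal u * (L * diagonal y) - diagonal v * (L * diagonal x)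
      = diagonal (Lagrange.nodalWeight univ k) *
        (of fun i j => (u i * y j - v i * x j) / (l j - k i)) *
        diagonal fun j => ∏ i, (l j - k i) := by
    ext i j
    simp [L, mul_diagonal, diagonal_mul, Lagrange.eval_basis_not_at_node (mem_univ i) (hkl i j),
      Lagrange.eval_nodal]
    ring
  have hweights : ∏ i, Lagrange.nodalWeight univ k i
      = ((∏ r : Fin n, (-1 : K) ^ (r : ℕ)) * (vandermonde k).det ^ 2)⁻¹ := by
    simp only [Lagrange.nodalWeight, prod_inv_distrib,
      prod_prod_erase_sub_eq_neg_one_pow_mul_det_vandermonde_sq]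
  have hV : (vandermonde k).det ≠ 0 := det_vandermonde_ne_zero_iff.mpr hk
  have hsign := prod_neg_one_pow_sq (R := K) univ fun r : Fin n => (r : ℕ)
  have hsign_ne : (∏ r : Fin n, (-1 : K) ^ (r : ℕ)) ≠ 0 := by
    rintro h
    simp [h] at hsign
  rw [hfactor, det_mul, det_fromBlocks_zero₂₁, det_fromBlocks_of_commute _ _ (commute_diagonal u v),
    hschur, det_mul, det_mul, det_diagonal, det_diagonal, det_transpose, hweights,
    prod_comm (f := fun j i => l j - k i)]
  field_simp
  rw [hsign, one_mul]

variable (R : Type*) [CommRing R] (n : ℕ)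

/-- Left multiplication swaps row `r` of the upper block row with row `r` of the lower one for
every odd `r`. -/
def swapOddRows : Matrix (Fin n ⊕ Fin n) (Fin n ⊕ Fin n) R :=
  fromBlocks (diagonal fun r : Fin n => if (r : ℕ) % 2 = 0 then 1 else 0)
    (diagonal fun r : Fin n => if (r : ℕ) % 2 = 0 then 0 else 1)
    (diagonal fun r : Fin n => if (r : ℕ) % 2 = 0 then 0 else 1)
    (diagonal fun r : Fin n => if (r : ℕ) % 2 = 0 then 1 else 0)

theorem det_swapOddRows : (swapOddRows R n).det = ∏ r : Fin n, (-1 : R) ^ (r : ℕ) := by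
  rw [swapOddRows, det_fromBlocks_of_commute]
  · rw [diagonal_mul_diagonal, diagonal_mul_diagonal, diagonal_sub, det_diagonal]
    refine prod_congr rfl fun r _ => ?_
    rcases Nat.mod_two_eq_zero_or_one r with h | h
    · simp [h, (Nat.even_iff.mpr h).neg_one_pow]
    · simp [h, (Nat.odd_iff.mpr h).neg_one_pow]
  · exact commute_diagonal _ _

variable {R n}

theorem swapOddRows_mul_fromBlocks (A B C D : Matrix (Fin n) (Fin n) R) :
    swapOddRows R n * fromBlocks A B C D =
      fromBlocks (of fun (r j : Fin n) => if (r : ℕ) % 2 = 0 then A r j else C r j)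
        (of fun (r j : Fin n) => if (r : ℕ) % 2 = 0 then B r j else D r j)
        (of fun (r j : Fin n) => if (r : ℕ) % 2 = 0 then C r j else A r j)
        (of fun (r j : Fin n) => if (r : ℕ) % 2 = 0 then D r j else B r j) := by
  rw [swapOddRows, fromBlocks_multiply]
  congr 1 <;> ext r j <;> by_cases h : (r : ℕ) % 2 = 0 <;> simp [h, diagonal_mul]

end Matrix

theorem okada_determinant_identity {K : Type*} [Field K] {n : ℕ}
    (u v k x y l : Fin n → K) (hk : Function.Injective k) (hkl : ∀ i j, l j ≠ k i) :
    (Matrix.of fun i j : Fin n => (u i * y j - v i * x j) / (l j - k i)).det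
      = (∏ i, ∏ j, (l j - k i))⁻¹ *
        (Matrix.fromBlocks
          (Matrix.of fun r j : Fin n =>
            if (r : ℕ) % 2 = 0 then k j ^ (r : ℕ) * u j else k j ^ (r : ℕ) * v j)
          (Matrix.of fun r j : Fin n =>
            if (r : ℕ) % 2 = 0 then l j ^ (r : ℕ) * x j else l j ^ (r : ℕ) * y j)
          (Matrix.of fun r j : Fin n =>
            if (r : ℕ) % 2 = 0 then k j ^ (r : ℕ) * v j else k j ^ (r : ℕ) * u j)
          (Matrix.of fun r j : Fin n =>
            if (r : ℕ) % 2 = 0 then l j ^ (r : ℕ) * y j else l j ^ (r : ℕ) * x j)).det := by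
  have hrows := swapOddRows_mul_fromBlocks ((vandermonde k)ᵀ * diagonal u)
    ((vandermonde l)ᵀ * diagonal x) ((vandermonde k)ᵀ * diagonal v) ((vandermonde l)ᵀ * diagonal y)
  simp only [mul_diagonal, transpose_apply, vandermonde_apply] at hrows
  have hprod : (∏ i, ∏ j, (l j - k i)) ≠ 0 :=
    prod_ne_zero_iff.mpr fun i _ => prod_ne_zero_iff.mpr fun j _ => sub_ne_zero.mpr (hkl i j)
  have hsign (a : K) :
      (∏ r : Fin n, (-1 : K) ^ (r : ℕ)) * ((∏ r : Fin n, (-1 : K) ^ (r : ℕ)) * a) = a := by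
    rw [← mul_assoc, ← sq, prod_neg_one_pow_sq, one_mul]
  rw [← hrows, det_mul, det_swapOddRows, det_fromBlocks_vandermonde_mul_diagonal u v k x y l hk hkl,
    hsign, inv_mul_cancel_left₀ hprod]
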